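/- Under the RLVR task-selection setup, for every iteration t ≥ 0 the cross-entropy loss L^{(t)} := E_{x_0∼𝒟}[log(1/P_t(f*(x_0) | x_0))] satisfies L^{(t)} ≤ Σ_{s=1}^S R_s^{(t)}, where R_s^{(t)} := 1/P_t(A_{s,τ(s)}) − 1. -/

import Mathlib

open scoped BigOperators RealInnerProductSpace ENNReal

noncomputable section

namespace RLVR

/-- Softmax distribution over a finite vocabulary. -/
def softmax {V : Type*} [Fintype V] (L : V → ℝ) (y : V) : ℝ :=
  Real.exp (L y) / ∑ w, Real.exp (L w)

variable {V : Type*} [Fintype V] [DecidableEq V] [Nonempty V]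
variable {P : Type*} [Fintype P]
variable {J S Bsz : ℕ}

/-- The model logits: `f_θ(x)[v] = Σ_j γ·1[σ_j(x) = v]·⟨h_{s,j}, θ⟩`, where the
positional index `s` records the number of already generated CoT tokens in `x`. -/
def model (γ : ℝ) (σ : Fin J → List V → V)
    (h : Fin S → Fin J → EuclideanSpace ℝ P)
    (θ : EuclideanSpace ℝ P) (s : Fin S) (x : List V) : V → ℝ :=
  fun v => ∑ j : Fin J, (if σ j x = v then γ else 0) * ⟪h s j, θ⟫

/-- The autoregressive policy `π_θ(y | x) = Softmax(f_θ(x))[y]`. -/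
def policy (γ : ℝ) (σ : Fin J → List V → V)
    (h : Fin S → Fin J → EuclideanSpace ℝ P)
    (θ : EuclideanSpace ℝ P) (s : Fin S) (x : List V) (y : V) : ℝ :=
  softmax (model γ σ h θ s x) y

/-- A trajectory: a prompt together with the `S` generated CoT tokens. -/
abbrev Traj (V : Type*) (S : ℕ) := List V × (Fin S → V)

/-- The prefix `x_n`: the prompt followed by the first `n` generated tokens. -/
def pref (ω : Traj V S) (n : ℕ) : List V := ω.1 ++ (List.ofFn ω.2).take n

/-- The full generated string `x_S`. -/
def fullStr (ω : Traj V S) : List V := ω.1 ++ List.ofFn ω.2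

/-- Density of a trajectory under prompt distribution `D` and parameters `θ`. -/
def dens (D : List V → ℝ) (γ : ℝ) (σ : Fin J → List V → V)
    (h : Fin S → Fin J → EuclideanSpace ℝ P) (θ : EuclideanSpace ℝ P)
    (ω : Traj V S) : ℝ :=
  D ω.1 * ∏ s : Fin S, policy γ σ h θ s (pref ω s.val) (ω.2 s)

/-- Probability `P_θ(E)` of an event `E` over trajectories. -/
def Pr (D : List V → ℝ) (γ : ℝ) (σ : Fin J → List V → V)
    (h : Fin S → Fin J → EuclideanSpace ℝ P) (θ : EuclideanSpace ℝ P)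
    (E : Set (Traj V S)) : ℝ :=
  ∑' ω : Traj V S, Set.indicator E (dens D γ σ h θ) ω

/-- Conditional probability `P_θ(E | F)`. -/
def condPr (D : List V → ℝ) (γ : ℝ) (σ : Fin J → List V → V)
    (h : Fin S → Fin J → EuclideanSpace ℝ P) (θ : EuclideanSpace ℝ P)
    (E F : Set (Traj V S)) : ℝ :=
  Pr D γ σ h θ (E ∩ F) / Pr D γ σ h θ F

/-- The event `A_{s,j}` that task `σ_j` is selected at step `s`. -/
def Av (σ : Fin J → List V → V) (s : Fin S) (j : Fin J) : Set (Traj V S) :=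
  {ω | ω.2 s = σ j (pref ω s.val)}

/-- The event that the verifier accepts the final string. -/
def VE (Verif : List V → Bool) : Set (Traj V S) :=
  {ω | Verif (fullStr ω) = true}

/-- The task-advantage ratio `ρ^θ_{s,j} = P_θ(V=1 | A_{s,j}) / P_θ(V=1 | A_{s,j}ᶜ)`,
valued in `ℝ≥0∞` (so that a vanishing denominator yields `∞`, matching the paper's
conventions). -/
def ratio (D : List V → ℝ) (γ : ℝ) (σ : Fin J → List V → V)
    (h : Fin S → Fin J → EuclideanSpace ℝ P) (Verif : List V → Bool)
    (θ : EuclideanSpace ℝ P) (s : Fin S) (j : Fin J) : ℝ≥0∞ :=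
  ENNReal.ofReal (condPr D γ σ h θ (VE Verif) (Av σ s j)) /
    ENNReal.ofReal (condPr D γ σ h θ (VE Verif) ((Av σ s j)ᶜ))

/-- The REINFORCE parameter update
`θ' = θ + (η/B)·Σ_b Σ_s ∇_θ log π_θ(y_s^{(b)} | x_{s−1}^{(b)})` on a batch `bs`. -/
def update (γ : ℝ) (σ : Fin J → List V → V)
    (h : Fin S → Fin J → EuclideanSpace ℝ P) (η : ℝ)
    (θ : EuclideanSpace ℝ P) (bs : Fin Bsz → Traj V S) : EuclideanSpace ℝ P :=
  θ + (η / (Bsz : ℝ)) • ∑ b : Fin Bsz, ∑ s : Fin S,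
    gradient (fun θ' => Real.log (policy γ σ h θ' s (pref (bs b) s.val) ((bs b).2 s))) θ

/-- Density of a single trajectory of the training batch: a draw from `P_θ`
conditioned on the verifier accepting. -/
def condDens (D : List V → ℝ) (γ : ℝ) (σ : Fin J → List V → V)
    (h : Fin S → Fin J → EuclideanSpace ℝ P) (Verif : List V → Bool)
    (θ : EuclideanSpace ℝ P) (ω : Traj V S) : ℝ :=
  Set.indicator (VE Verif) (dens D γ σ h θ) ω / Pr D γ σ h θ (VE Verif)

/-- Expectation, over an i.i.d. batch of `Bsz` positive samples
(drawn from `P_θ(· | V = 1)`), of a function of the batch. -/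
def Ebatch (D : List V → ℝ) (γ : ℝ) (σ : Fin J → List V → V)
    (h : Fin S → Fin J → EuclideanSpace ℝ P) (Verif : List V → Bool)
    (θ : EuclideanSpace ℝ P) (F : (Fin Bsz → Traj V S) → ℝ) : ℝ :=
  ∑' bs : Fin Bsz → Traj V S, (∏ b : Fin Bsz, condDens D γ σ h Verif θ (bs b)) * F bs

/-- The empirical discrepancy
`Q_{s,j} = (1/B)·Σ_b (1[y_s^{(b)} = σ_j(x_{s−1}^{(b)})] − π_θ(σ_j(x_{s−1}^{(b)}) | x_{s−1}^{(b)}))`. -/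
def Q (γ : ℝ) (σ : Fin J → List V → V)
    (h : Fin S → Fin J → EuclideanSpace ℝ P) (θ : EuclideanSpace ℝ P)
    (bs : Fin Bsz → Traj V S) (s : Fin S) (j : Fin J) : ℝ :=
  (1 / (Bsz : ℝ)) * ∑ b : Fin Bsz,
    ((if (bs b).2 s = σ j (pref (bs b) s.val) then (1 : ℝ) else 0)
      - policy γ σ h θ s (pref (bs b) s.val) (σ j (pref (bs b) s.val)))

/-- The first `n` steps of the ground-truth chain of thought started at prompt `x0`:
apply `σ_{τ(1)}, …, σ_{τ(n)}` autoregressively. -/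
def fstarPref (σ : Fin J → List V → V) (τ : Fin S → Fin J) (x0 : List V)
    (n : ℕ) : List V :=
  ((List.finRange S).take n).foldl (fun acc s => acc ++ [σ (τ s) acc]) x0

/-- The target function `f*`: the full ground-truth chain of thought. -/
def fstar (σ : Fin J → List V → V) (τ : Fin S → Fin J) (x0 : List V) : List V :=
  fstarPref σ τ x0 S

/-- `P_θ(f*(x0) | x0)`: the probability of generating exactly the ground-truth
completion from prompt `x0` (chain rule of probability). -/
def targetProb (γ : ℝ) (σ : Fin J → List V → V)
    (h : Fin S → Fin J → EuclideanSpace ℝ P) (τ : Fin S → Fin J)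
    (θ : EuclideanSpace ℝ P) (x0 : List V) : ℝ :=
  ∏ s : Fin S, policy γ σ h θ s (fstarPref σ τ x0 s.val) (σ (τ s) (fstarPref σ τ x0 s.val))

/-- The cross-entropy loss `L(θ) = E_{x0∼D}[log(1/P_θ(f*(x0) | x0))]`. -/
def celoss (D : List V → ℝ) (γ : ℝ) (σ : Fin J → List V → V)
    (h : Fin S → Fin J → EuclideanSpace ℝ P) (τ : Fin S → Fin J)
    (θ : EuclideanSpace ℝ P) : ℝ :=
  ∑' x0 : List V, D x0 * Real.log (1 / targetProb γ σ h τ θ x0)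

/-- The training iterates: `θ^{(0)} = θ0` and
`θ^{(t+1)} = update(θ^{(t)}, batch t)`. -/
def thetaSeq (γ : ℝ) (σ : Fin J → List V → V)
    (h : Fin S → Fin J → EuclideanSpace ℝ P) (η : ℝ) (θ0 : EuclideanSpace ℝ P)
    (ω : ℕ → Fin Bsz → Traj V S) : ℕ → EuclideanSpace ℝ P
  | 0 => θ0
  | t + 1 => update γ σ h η (thetaSeq γ σ h η θ0 ω t) (ω t)

/-- Extension of a finite-horizon family of batches to all times. -/
def extendBatches (T : ℕ) (ωf : Fin T → Fin Bsz → Traj V S) :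
    ℕ → Fin Bsz → Traj V S :=
  fun t => if ht : t < T then ωf ⟨t, ht⟩ else fun _ => ([], fun _ => Classical.arbitrary V)

/-- Density of the whole training run over horizon `T`: at each iteration `t` the
batch is drawn i.i.d. from `P_{θ^{(t)}}(· | V = 1)`. -/
def trainDens (D : List V → ℝ) (γ : ℝ) (σ : Fin J → List V → V)
    (h : Fin S → Fin J → EuclideanSpace ℝ P) (Verif : List V → Bool) (η : ℝ)
    (θ0 : EuclideanSpace ℝ P) (T : ℕ) (ωf : Fin T → Fin Bsz → Traj V S) : ℝ :=
  ∏ t : Fin T, ∏ b : Fin Bsz,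
    condDens D γ σ h Verif (thetaSeq γ σ h η θ0 (extendBatches T ωf) t.val) (ωf t b)

/-- Probability, over the training randomness up to horizon `T`, of an event on the
batches. -/
def PrTrain (D : List V → ℝ) (γ : ℝ) (σ : Fin J → List V → V)
    (h : Fin S → Fin J → EuclideanSpace ℝ P) (Verif : List V → Bool) (η : ℝ)
    (θ0 : EuclideanSpace ℝ P) (T : ℕ)
    (E : Set (Fin T → Fin Bsz → Traj V S)) : ℝ :=
  ∑' ωf : Fin T → Fin Bsz → Traj V S,
    Set.indicator E (trainDens D γ σ h Verif η θ0 T) ωf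

end RLVR

/-!
Because the tasks always propose pairwise distinct tokens, the logit of `σ_j(x)` at step `s`
is `γ⟪h_{s,j}, θ⟫` and every other token has logit `0`. Hence `π_θ(σ_j(x) | x)` is a number
`p_{s,j}` that does not depend on the prefix `x`. The chain rule then gives
`P_θ(f*(x₀) | x₀) = ∏_s p_{s,τ(s)}` for every prompt and `P_θ(A_{s,j}) = p_{s,j}`, and
`log (1 / ∏_s p_s) = ∑_s log (1 / p_s) ≤ ∑_s (1 / p_s - 1)`.
-/

theorem Real.log_one_div_prod_le_sum {ι : Type*} (s : Finset ι) (p : ι → ℝ)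
    (hp : ∀ i ∈ s, 0 < p i) :
    Real.log (1 / ∏ i ∈ s, p i) ≤ ∑ i ∈ s, (1 / p i - 1) := by
  rw [one_div, ← Finset.prod_inv_distrib, Real.log_prod fun i hi => (inv_pos.mpr (hp i hi)).ne']
  refine Finset.sum_le_sum fun i hi => ?_
  rw [one_div]
  exact Real.log_le_sub_one_of_pos (inv_pos.mpr (hp i hi))

theorem tsum_prod_eq_tsum_sum_of_nonneg {α β : Type*} [Fintype β] {f : α × β → ℝ} (hf : 0 ≤ f)
    (hsum : Summable fun a => ∑ b, f (a, b)) :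
    ∑' p, f p = ∑' a, ∑ b, f (a, b) := by
  have hfib : ∀ a, Summable fun b => f (a, b) := fun _ => .of_finite
  have hsum' : Summable fun a => ∑' b, f (a, b) := by simpa only [tsum_fintype] using hsum
  rw [((summable_prod_of_nonneg hf).2 ⟨hfib, hsum'⟩).tsum_prod' hfib]
  simp only [tsum_fintype]

theorem Fintype.sum_fin_succ_pi {V M : Type*} [Fintype V] [AddCommMonoid M] {n : ℕ}
    (F : (Fin (n + 1) → V) → M) :
    ∑ y, F y = ∑ v, ∑ ys : Fin n → V, F (Fin.cons v ys) := by
  rw [← (Fin.consEquiv fun _ => V).sum_comp, Fintype.sum_prod_type]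
  rfl

namespace RLVR

section Autoregressive

variable {V : Type*}

/-- The probability of the continuation `y` of `x0` when token `i` is drawn from
`π i (x0 ++ y₀ ⋯ y_{i-1})`. -/
def autoregProb {n : ℕ} (π : Fin n → List V → V → ℝ) (x0 : List V) (y : Fin n → V) : ℝ :=
  ∏ i : Fin n, π i (x0 ++ (List.ofFn y).take i) (y i)

theorem autoregProb_cons {n : ℕ} (π : Fin (n + 1) → List V → V → ℝ) (x0 : List V) (v : V)
    (ys : Fin n → V) :
    autoregProb π x0 (Fin.cons v ys)
      = π 0 x0 v * autoregProb (fun i => π i.succ) (x0 ++ [v]) ys := by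
  simp [autoregProb, Fin.prod_univ_succ, List.ofFn_succ]

theorem sum_autoregProb [Fintype V] {n : ℕ} (π : Fin n → List V → V → ℝ)
    (hπ : ∀ i x, ∑ v, π i x v = 1) (x0 : List V) : ∑ y, autoregProb π x0 y = 1 := by
  induction n generalizing x0 with
  | zero => simp [autoregProb]
  | succ n ih =>
    simp_rw [Fintype.sum_fin_succ_pi, autoregProb_cons, ← Finset.mul_sum,
      ih _ (fun i => hπ i.succ), mul_one, hπ]

theorem sum_autoregProb_select [Fintype V] [DecidableEq V] {n : ℕ} (π : Fin n → List V → V → ℝ)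
    (hπ : ∀ i x, ∑ v, π i x v = 1) (s : Fin n) (g : List V → V) (p : ℝ)
    (hp : ∀ x, π s x (g x) = p) (x0 : List V) :
    ∑ y, (if y s = g (x0 ++ (List.ofFn y).take s) then autoregProb π x0 y else 0) = p := by
  induction n generalizing x0 with
  | zero => exact s.elim0
  | succ n ih =>
    rw [Fintype.sum_fin_succ_pi]
    induction s using Fin.cases with
    | zero =>
      simp [autoregProb_cons, ← Finset.mul_sum, sum_autoregProb _ fun i => hπ i.succ, hp]
    | succ i =>
      have ih' := fun v => ih (fun i => π i.succ) (fun i => hπ i.succ) i hp (x0 ++ [v])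
      simp only [List.append_assoc, List.singleton_append] at ih'
      simp only [List.ofFn_cons, Fin.cons_succ, Fin.val_succ, List.take_succ_cons,
        autoregProb_cons, ← mul_ite_zero, ← Finset.mul_sum, ih', ← Finset.sum_mul, hπ, one_mul]

end Autoregressive

theorem softmax_pos {V : Type*} [Fintype V] [Nonempty V] (L : V → ℝ) (y : V) :
    0 < softmax L y :=
  div_pos (Real.exp_pos _) (Finset.sum_pos (fun _ _ => Real.exp_pos _) Finset.univ_nonempty)

theorem sum_softmax {V : Type*} [Fintype V] [Nonempty V] (L : V → ℝ) : ∑ y, softmax L y = 1 := by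
  simp only [softmax]
  rw [← Finset.sum_div,
    div_self (Finset.sum_pos (fun _ _ => Real.exp_pos _) Finset.univ_nonempty).ne']

/-- The selection probability `p_{s,j}`: softmax of the logits `γ⟪h_{s,j}, θ⟫` on the `J` task
tokens and `0` on the other `|V| - J` tokens. -/
def selProb (V : Type*) [Fintype V] {P : Type*} [Fintype P] {J S : ℕ} (γ : ℝ)
    (h : Fin S → Fin J → EuclideanSpace ℝ P) (θ : EuclideanSpace ℝ P) (s : Fin S) (j : Fin J) : ℝ :=
  Real.exp (γ * ⟪h s j, θ⟫) / (∑ j', (Real.exp (γ * ⟪h s j', θ⟫) - 1) + Fintype.card V)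

section Model

variable {V : Type*} [DecidableEq V] {P : Type*} [Fintype P] {J S : ℕ} {γ : ℝ}
  {σ : Fin J → List V → V} (h : Fin S → Fin J → EuclideanSpace ℝ P) (θ : EuclideanSpace ℝ P)

theorem model_apply_task (hσ : ∀ x, Function.Injective fun j => σ j x) (s : Fin S) (x : List V)
    (j : Fin J) : model γ σ h θ s x (σ j x) = γ * ⟪h s j, θ⟫ := by
  rw [model, Finset.sum_eq_single j (fun j' _ hj' => by rw [if_neg fun e => hj' (hσ x e), zero_mul])
    (by simp)]
  simp

theorem model_apply_of_forall_ne (s : Fin S) (x : List V) {v : V} (hv : ∀ j, σ j x ≠ v) :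
    model γ σ h θ s x v = 0 :=
  Finset.sum_eq_zero fun j _ => by rw [if_neg (hv j), zero_mul]

theorem sum_exp_model [Fintype V] (hσ : ∀ x, Function.Injective fun j => σ j x) (s : Fin S)
    (x : List V) :
    ∑ w, Real.exp (model γ σ h θ s x w)
      = ∑ j, (Real.exp (γ * ⟪h s j, θ⟫) - 1) + Fintype.card V := by
  have htasks : ∑ j, (Real.exp (γ * ⟪h s j, θ⟫) - 1) = ∑ w, (Real.exp (model γ σ h θ s x w) - 1) :=
    Fintype.sum_of_injective (fun j => σ j x) (hσ x) _ _
      (fun w hw => by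
        rw [model_apply_of_forall_ne h θ s x fun j hj => hw ⟨j, hj⟩, Real.exp_zero, sub_self])
      (fun j => by rw [model_apply_task h θ hσ])
  rw [htasks, Finset.sum_sub_distrib]
  simp

theorem policy_apply_task [Fintype V] (hσ : ∀ x, Function.Injective fun j => σ j x) (s : Fin S)
    (x : List V) (j : Fin J) : policy γ σ h θ s x (σ j x) = selProb V γ h θ s j := by
  rw [policy, softmax, model_apply_task h θ hσ, sum_exp_model h θ hσ, selProb]

theorem selProb_pos [Fintype V] [Nonempty V] (hσ : ∀ x, Function.Injective fun j => σ j x)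
    (s : Fin S) (j : Fin J) : 0 < selProb V γ h θ s j :=
  policy_apply_task h θ hσ s [] j ▸ softmax_pos _ _

end Model

section Probability

variable {V : Type*} [Fintype V] [DecidableEq V] {P : Type*} [Fintype P] {J S : ℕ} {γ : ℝ}
  {σ : Fin J → List V → V} {h : Fin S → Fin J → EuclideanSpace ℝ P} {θ : EuclideanSpace ℝ P}
  {D : List V → ℝ}

theorem dens_mk (x0 : List V) (y : Fin S → V) :
    dens D γ σ h θ (x0, y) = D x0 * autoregProb (policy γ σ h θ) x0 y :=
  rfl

theorem dens_nonneg [Nonempty V] (hD0 : ∀ x, 0 ≤ D x) (ω : Traj V S) : 0 ≤ dens D γ σ h θ ω :=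
  mul_nonneg (hD0 _) (Finset.prod_nonneg fun _ _ => (softmax_pos _ _).le)

theorem sum_indicator_Av_dens [Nonempty V] (hσ : ∀ x, Function.Injective fun j => σ j x)
    (s : Fin S) (j : Fin J) (x0 : List V) :
    ∑ y, (Av σ s j).indicator (dens D γ σ h θ) (x0, y) = D x0 * selProb V γ h θ s j := by
  simp only [Set.indicator_apply, Av, Set.mem_ofPred_eq, pref, dens_mk, ← mul_ite_zero,
    ← Finset.mul_sum]
  rw [sum_autoregProb_select (policy γ σ h θ) (fun _ _ => sum_softmax _) s (σ j) _
    (policy_apply_task h θ hσ s · j)]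

theorem Pr_Av [Nonempty V] (hσ : ∀ x, Function.Injective fun j => σ j x) (hD0 : ∀ x, 0 ≤ D x)
    (hD1 : ∑' x, D x = 1) (s : Fin S) (j : Fin J) :
    Pr D γ σ h θ (Av σ s j) = selProb V γ h θ s j := by
  have hD : Summable D := by
    by_contra hD
    simp [tsum_eq_zero_of_not_summable hD] at hD1
  rw [Pr, tsum_prod_eq_tsum_sum_of_nonneg
    (fun ω => Set.indicator_nonneg (fun ω _ => dens_nonneg hD0 ω) ω)]
  · simp_rw [sum_indicator_Av_dens hσ]
    rw [tsum_mul_right, hD1, one_mul]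
  · simp_rw [sum_indicator_Av_dens hσ]
    exact hD.mul_right _

theorem targetProb_eq (hσ : ∀ x, Function.Injective fun j => σ j x) (τ : Fin S → Fin J)
    (x0 : List V) : targetProb γ σ h τ θ x0 = ∏ s, selProb V γ h θ s (τ s) :=
  Finset.prod_congr rfl fun s _ => policy_apply_task h θ hσ s _ (τ s)

theorem celoss_eq (hσ : ∀ x, Function.Injective fun j => σ j x) (hD1 : ∑' x, D x = 1)
    (τ : Fin S → Fin J) :
    celoss D γ σ h τ θ = Real.log (1 / ∏ s, selProb V γ h θ s (τ s)) := by
  simp only [celoss, targetProb_eq hσ]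
  rw [tsum_mul_right, hD1, one_mul]

end Probability

end RLVR

open RLVR in
theorem stmt7_general {V : Type*} [Fintype V] [DecidableEq V] [Nonempty V]
    {P : Type*} [Fintype P] {J S Bsz : ℕ}
    (γ η : ℝ)
    (σ : Fin J → List V → V)
    (hσ : ∀ j j' : Fin J, j ≠ j' → ∀ x : List V, σ j x ≠ σ j' x)
    (h : Fin S → Fin J → EuclideanSpace ℝ P)
    (D : List V → ℝ) (hD0 : ∀ x, 0 ≤ D x) (hD1 : ∑' x : List V, D x = 1)
    (τ : Fin S → Fin J)
    (θ0 : EuclideanSpace ℝ P) :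
    ∀ (ω : ℕ → Fin Bsz → Traj V S) (t : ℕ),
      celoss D γ σ h τ (thetaSeq γ σ h η θ0 ω t)
        ≤ ∑ s : Fin S,
            (1 / Pr D γ σ h (thetaSeq γ σ h η θ0 ω t) (Av σ s (τ s)) - 1) := by
  intro ω t
  have hσ' : ∀ x, Function.Injective fun j => σ j x :=
    fun x j j' hjj' => by_contra fun hne => hσ j j' hne x hjj'
  rw [celoss_eq hσ' hD1]
  simp only [Pr_Av hσ' hD0 hD1]
  exact Real.log_one_div_prod_le_sum _ _ fun s _ => selProb_pos _ _ hσ' s (τ s)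

open RLVR in
/-- Lemma A.9 of the paper. At every iteration `t` (surely, for any
realization `ω` of the training batches), the cross-entropy loss is bounded by the sum
of the error ratios:
`L^{(t)} ≤ Σ_{s=1}^S (1/P_t(A_{s,τ(s)}) − 1)`. -/
theorem stmt7 {V : Type*} [Fintype V] [DecidableEq V] [Nonempty V]
    {P : Type*} [Fintype P] {J S Bsz : ℕ}
    (hS : 0 < S) (hJ : 0 < J) (hBsz : 0 < Bsz)
    (γ η : ℝ) (hγ : 0 < γ) (hη : 0 < η)
    (σ : Fin J → List V → V)
    (hσ : ∀ j j' : Fin J, j ≠ j' → ∀ x : List V, σ j x ≠ σ j' x)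
    (h : Fin S → Fin J → EuclideanSpace ℝ P)
    (hh : Orthonormal ℝ fun sj : Fin S × Fin J => h sj.1 sj.2)
    (D : List V → ℝ) (hD0 : ∀ x, 0 ≤ D x) (hD1 : ∑' x : List V, D x = 1)
    (Verif : List V → Bool) (τ : Fin S → Fin J)
    (hA1 : ∀ x0 : List V, 0 < D x0 → Verif (fstar σ τ x0) = true)
    (θ0 : EuclideanSpace ℝ P) :
    ∀ (ω : ℕ → Fin Bsz → Traj V S) (t : ℕ),
      celoss D γ σ h τ (thetaSeq γ σ h η θ0 ω t)
        ≤ ∑ s : Fin S,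
            (1 / Pr D γ σ h (thetaSeq γ σ h η θ0 ω t) (Av σ s (τ s)) - 1) :=
  stmt7_general γ η σ hσ h D hD0 hD1 τ θ0
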